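/- arXiv:math/0503525 — 3 statements merged into one kernel-verified Lean document; each statement's English description precedes it below -/
import Mathlib

section
/- Fix d ≥ 1 and φ > 0, and suppose λ : ℕ → (0,∞) satisfies lim_{N→∞} λ(N)/N^{1/(1+φ)} = 0. Then lim sup_{N→∞} m(N) < 1, where m(N) = 2dλ(N) · ∏_{i=1}^{N-1} (iφ + 2dλ(N))/(1 + iφ + 2dλ(N)); in fact m(N) → 0 as N → ∞. -/
/-!
Write `a_i = 1 + iφ + c` with `c = 2dλ(N)`, so that `a_{i+1} = a_i + φ` and the `i`-th factor of the
product is `1 - 1/a_i`. Since `1 - 1/a ≤ e^{-1/a} ≤ (a/(a+φ))^{1/φ}`, the product telescopes to at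
most `(a_1/a_N)^{1/φ}`. Once `c ≤ N^β` with `β = 1/(1+φ)`, this is `O(N^{(β-1)/φ}) = O(N^{-β})`,
hence `m(N) = O(c/N^β) → 0`.
-/

open Filter Finset Real

lemma sub_one_div_le_rpow_div_add {a φ : ℝ} (hφ : 0 < φ) (ha : 0 < a) :
    (a - 1) / a ≤ (a / (a + φ)) ^ φ⁻¹ :=
  have exp_neg_le : exp (-(φ / a)) ≤ a / (a + φ) := by
    rw [exp_neg, ← one_div, div_le_div_iff₀ (exp_pos _) (by linarith)]
    nlinarith [add_one_le_exp (φ / a), div_mul_cancel₀ φ ha.ne']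
  calc (a - 1) / a = -a⁻¹ + 1 := by field_simp; ring
    _ ≤ exp (-a⁻¹) := add_one_le_exp _
    _ = exp (-(φ / a)) ^ φ⁻¹ := by rw [← exp_mul]; field_simp
    _ ≤ (a / (a + φ)) ^ φ⁻¹ := rpow_le_rpow (exp_pos _).le exp_neg_le (inv_nonneg.2 hφ.le)

lemma prod_Icc_le_rpow_div_of_le_rpow_div {f g : ℕ → ℝ} {p : ℝ} (hf : ∀ i, 0 ≤ f i)
    (hg : ∀ i, 0 < g i) (hfg : ∀ i, f i ≤ (g i / g (i + 1)) ^ p) (n : ℕ) :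
    ∏ i ∈ Icc 1 n, f i ≤ (g 1 / g (n + 1)) ^ p := by
  induction n with
  | zero => simp [div_self (hg 1).ne']
  | succ n ih =>
    rw [prod_Icc_succ_top (by omega)]
    calc (∏ i ∈ Icc 1 n, f i) * f (n + 1)
        ≤ (g 1 / g (n + 1)) ^ p * (g (n + 1) / g (n + 1 + 1)) ^ p :=
          mul_le_mul ih (hfg _) (hf _) (rpow_nonneg (div_pos (hg _) (hg _)).le _)
      _ = (g 1 / g (n + 1 + 1)) ^ p := by
          rw [← mul_rpow (div_pos (hg _) (hg _)).le (div_pos (hg _) (hg _)).le,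
            div_mul_div_cancel₀ (hg _).ne']

lemma prod_Icc_div_one_add_le_rpow {φ c : ℝ} (hφ : 0 < φ) (hc : 0 ≤ c) {n : ℕ} (hn : 1 ≤ n) :
    ∏ i ∈ Icc 1 (n - 1), (i * φ + c) / (1 + i * φ + c)
      ≤ ((1 + φ + c) / (1 + n * φ + c)) ^ φ⁻¹ := by
  have hfactor (i : ℕ) : (i * φ + c) / (1 + i * φ + c)
      ≤ ((1 + i * φ + c) / (1 + (i + 1 : ℕ) * φ + c)) ^ φ⁻¹ := by
    convert sub_one_div_le_rpow_div_add (a := 1 + i * φ + c) hφ (by positivity) using 3 <;>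
      push_cast <;> ring
  simpa [Nat.cast_sub hn] using prod_Icc_le_rpow_div_of_le_rpow_div
    (fun i => by positivity) (fun i => by positivity) hfactor (n - 1)

lemma div_one_add_le_mul_rpow_sub_one {φ c x β : ℝ} (hφ : 0 < φ) (hc : 0 ≤ c) (hx : 1 ≤ x)
    (hβ : 0 ≤ β) (hcx : c ≤ x ^ β) :
    (1 + φ + c) / (1 + x * φ + c) ≤ (2 + φ) / φ * x ^ (β - 1) := by
  have hx0 : 0 < x := by linarith
  have hxβ : 1 ≤ x ^ β := one_le_rpow hx hβ
  calc (1 + φ + c) / (1 + x * φ + c) ≤ (2 + φ) * x ^ β / (x * φ) :=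
        div_le_div₀ (by positivity) (by nlinarith) (by positivity) (by linarith)
    _ = (2 + φ) / φ * x ^ (β - 1) := by
        rw [rpow_sub_one hx0.ne']
        field_simp

lemma mul_rpow_div_one_add_le {φ c x : ℝ} (hφ : 0 < φ) (hc : 0 ≤ c) (hx : 1 ≤ x)
    (hcx : c ≤ x ^ (1 / (1 + φ))) :
    c * ((1 + φ + c) / (1 + x * φ + c)) ^ φ⁻¹
      ≤ ((2 + φ) / φ) ^ φ⁻¹ * (c / x ^ (1 / (1 + φ))) := by
  have hx0 : 0 < x := by linarith
  -- the exponent `1/(1+φ)` is exactly the one for which `(β - 1)/φ = -β`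
  have hexp : (1 / (1 + φ) - 1) * φ⁻¹ = -(1 / (1 + φ)) := by field_simp; ring
  calc c * ((1 + φ + c) / (1 + x * φ + c)) ^ φ⁻¹
      ≤ c * ((2 + φ) / φ * x ^ (1 / (1 + φ) - 1)) ^ φ⁻¹ := by
        gcongr
        exact div_one_add_le_mul_rpow_sub_one hφ hc hx (by positivity) hcx
    _ = ((2 + φ) / φ) ^ φ⁻¹ * (c / x ^ (1 / (1 + φ))) := by
        rw [mul_rpow (by positivity) (by positivity), ← rpow_mul hx0.le, hexp,
          rpow_neg hx0.le]
        ring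

theorem mean_offspring_tendsto_zero_general
    (d : ℕ) (phi : ℝ) (hphi : 0 < phi)
    (lam : ℕ → ℝ) (hlam : ∀ N, 0 < lam N)
    (hlim : Tendsto (fun N : ℕ => lam N / (N : ℝ) ^ (1 / (1 + phi))) atTop (nhds 0)) :
    Tendsto (fun N : ℕ =>
        2 * d * lam N * ∏ i ∈ Finset.Icc 1 (N - 1),
          (i * phi + 2 * d * lam N) / (1 + i * phi + 2 * d * lam N))
      atTop (nhds 0) := by
  set c : ℕ → ℝ := fun N => 2 * d * lam N
  have hc : ∀ N, 0 ≤ c N := fun N => by have := hlam N; positivity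
  have hc_lim : Tendsto (fun N : ℕ => c N / (N : ℝ) ^ (1 / (1 + phi))) atTop (nhds 0) := by
    simpa [c, mul_div_assoc] using hlim.const_mul (2 * d : ℝ)
  have hc_le : ∀ᶠ N : ℕ in atTop, c N ≤ (N : ℝ) ^ (1 / (1 + phi)) := by
    filter_upwards [hc_lim.eventually (ge_mem_nhds one_pos), eventually_ge_atTop 1] with N hN hN1
    rwa [div_le_one (rpow_pos_of_pos (by exact_mod_cast hN1) _)] at hN
  refine squeeze_zero' (Eventually.of_forall fun N => mul_nonneg (hc N) ?_) ?_
    (by simpa only [mul_zero] using hc_lim.const_mul (((2 + phi) / phi) ^ phi⁻¹))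
  · have := hc N
    exact prod_nonneg fun i _ => by positivity
  · filter_upwards [hc_le, eventually_ge_atTop 1] with N hcN hN1
    exact (mul_le_mul_of_nonneg_left (prod_Icc_div_one_add_le_rpow hphi (hc N) hN1) (hc N)).trans
      (mul_rpow_div_one_add_le hphi (hc N) (by exact_mod_cast hN1) hcN)

/-- Corollary 1 (calculus content): if `λ(N)/N^{1/(1+φ)} → 0` with `φ > 0`, then the
mean offspring number `m(N) = 2dλ(N) ∏_{i=1}^{N-1} (iφ+2dλ(N))/(1+iφ+2dλ(N))` tends
to `0` (in particular `limsup m(N) < 1`). -/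
theorem mean_offspring_tendsto_zero
    (d : ℕ) (hd : 1 ≤ d) (phi : ℝ) (hphi : 0 < phi)
    (lam : ℕ → ℝ) (hlam : ∀ N, 0 < lam N)
    (hlim : Tendsto (fun N : ℕ => lam N / (N : ℝ) ^ (1 / (1 + phi))) atTop (nhds 0)) :
    Tendsto (fun N : ℕ =>
        2 * d * lam N * ∏ i ∈ Finset.Icc 1 (N - 1),
          (i * phi + 2 * d * lam N) / (1 + i * phi + 2 * d * lam N))
      atTop (nhds 0) :=
  mean_offspring_tendsto_zero_general d phi hphi lam hlam hlim
end

section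
/- Fix φ ≥ 0, d ≥ 1, and suppose λ(N) = c·N^b with c > 0 and b < 1/(1+φ) when φ > 0. Then 2dλ(N)·∏_{i=1}^{N-1}(iφ+2dλ(N))/(1+iφ+2dλ(N)) → 0 as N → ∞. In particular, for a polynomially growing external birth rate with exponent below 1/(1+φ), the mean offspring number is eventually below 1. -/
open Filter Finset Real Asymptotics Topology

/-!
Each factor satisfies `x / (1 + x) ≤ exp (-1 / (1 + x)) ≤ ((1 + x) / (1 + x + φ)) ^ (1 / φ)`, so for
`φ > 0` the product telescopes to `((1 + φ + a) / (1 + N φ + a)) ^ (1 / φ)`. With `a ≲ N ^ β` this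
gives `m(N) ≲ N ^ (β + (β - 1) / φ)`, and the exponent is negative exactly when `β (1 + φ) < 1`.
Since `m(N)` increases with `φ`, the case `φ = 0` follows from a slightly larger `φ`.
-/

/-- The paper's `m(N)`, with `a = 2dλ(N)`. -/
noncomputable def meanOffspring (φ a : ℝ) (N : ℕ) : ℝ :=
  a * ∏ i ∈ Icc 1 (N - 1), (i * φ + a) / (1 + i * φ + a)

lemma div_one_add_le_div_one_add {x y : ℝ} (hx : 0 ≤ x) (hxy : x ≤ y) :
    x / (1 + x) ≤ y / (1 + y) := by
  rw [div_le_div_iff₀ (by linarith) (by linarith)]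
  linarith

lemma div_one_add_le_rpow {y φ : ℝ} (hy : 0 < 1 + y) (hφ : 0 < φ) :
    y / (1 + y) ≤ ((1 + y) / (1 + y + φ)) ^ (1 / φ) := by
  calc y / (1 + y) = -(1 / (1 + y)) + 1 := by field_simp; ring
    _ ≤ exp (-(1 / (1 + y))) := add_one_le_exp _
    _ = (exp (φ / (1 + y)))⁻¹ ^ (1 / φ) := by
        rw [← exp_neg, ← exp_mul]; congr 1; field_simp
    _ ≤ (1 + φ / (1 + y))⁻¹ ^ (1 / φ) := by
        gcongr
        linarith [add_one_le_exp (φ / (1 + y))]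
    _ = ((1 + y) / (1 + y + φ)) ^ (1 / φ) := by
        congr 1; field_simp

lemma prod_Icc_le_rpow {φ a : ℝ} (hφ : 0 < φ) (ha : 0 ≤ a) (n : ℕ) :
    ∏ i ∈ Icc 1 n, ((i : ℝ) * φ + a) / (1 + i * φ + a)
      ≤ ((1 + φ + a) / (1 + (n + 1) * φ + a)) ^ (1 / φ) := by
  induction n with
  | zero => simp [div_self (by positivity : (1 + φ + a) ≠ 0)]
  | succ n ih =>
    rw [prod_Icc_succ_top (by omega)]
    calc _ ≤ ((1 + φ + a) / (1 + (n + 1) * φ + a)) ^ (1 / φ)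
          * ((1 + ((n + 1 : ℕ) : ℝ) * φ + a) / (1 + ((n + 1 : ℕ) : ℝ) * φ + a + φ)) ^ (1 / φ) := by
          gcongr
          have := div_one_add_le_rpow (y := (n + 1 : ℕ) * φ + a) (by positivity) hφ
          simpa only [add_assoc] using this
      _ = _ := by
          rw [← mul_rpow (by positivity) (by positivity)]
          congr 1
          push_cast
          field_simp
          ring

lemma meanOffspring_nonneg {φ a : ℝ} (hφ : 0 ≤ φ) (ha : 0 ≤ a) (N : ℕ) :
    0 ≤ meanOffspring φ a N :=
  mul_nonneg ha (prod_nonneg fun _ _ => by positivity)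

lemma meanOffspring_mono_left {φ ψ a : ℝ} (hφ : 0 ≤ φ) (hφψ : φ ≤ ψ) (ha : 0 ≤ a) (N : ℕ) :
    meanOffspring φ a N ≤ meanOffspring ψ a N := by
  refine mul_le_mul_of_nonneg_left (prod_le_prod (fun _ _ => by positivity) fun i _ => ?_) ha
  simpa only [add_assoc] using
    div_one_add_le_div_one_add (by positivity) (by gcongr : (i : ℝ) * φ + a ≤ i * ψ + a)

lemma meanOffspring_le_mul_rpow {φ a A β : ℝ} (hφ : 0 < φ) (hβ : 0 ≤ β) {N : ℕ} (hN : 1 ≤ N)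
    (ha : 0 ≤ a) (haA : a ≤ A * (N : ℝ) ^ β) :
    meanOffspring φ a N ≤ A * ((1 + φ + A) / φ) ^ (1 / φ) * (N : ℝ) ^ (β + (β - 1) / φ) := by
  have hN1 : (1 : ℝ) ≤ N := by exact_mod_cast hN
  have hNβ : 1 ≤ (N : ℝ) ^ β := one_le_rpow hN1 hβ
  have hA : 0 ≤ A := by nlinarith
  have hprod : ∏ i ∈ Icc 1 (N - 1), ((i : ℝ) * φ + a) / (1 + i * φ + a)
      ≤ ((1 + φ + a) / (1 + N * φ + a)) ^ (1 / φ) := by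
    simpa [Nat.cast_sub hN] using prod_Icc_le_rpow hφ ha (N - 1)
  have hratio : (1 + φ + a) / (1 + N * φ + a) ≤ (1 + φ + A) / φ * (N : ℝ) ^ (β - 1) := by
    rw [rpow_sub_one (by positivity), div_mul_div_comm, mul_comm φ]
    apply div_le_div₀ (by positivity) (by nlinarith) (by positivity) (by nlinarith)
  calc meanOffspring φ a N
      ≤ A * (N : ℝ) ^ β * ((1 + φ + a) / (1 + N * φ + a)) ^ (1 / φ) :=
        mul_le_mul haA hprod (prod_nonneg fun _ _ => by positivity) (by positivity)
    _ ≤ A * (N : ℝ) ^ β * ((1 + φ + A) / φ * (N : ℝ) ^ (β - 1)) ^ (1 / φ) := by gcongr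
    _ = A * ((1 + φ + A) / φ) ^ (1 / φ) * (N : ℝ) ^ (β + (β - 1) / φ) := by
        rw [mul_rpow (by positivity) (by positivity), ← rpow_mul (by positivity), mul_one_div,
          rpow_add (by positivity)]
        ring

lemma tendsto_meanOffspring_of_pos {φ β A : ℝ} (hφ : 0 < φ) (hβ0 : 0 ≤ β)
    (hβ : β < 1 / (1 + φ)) {a : ℕ → ℝ} (ha : ∀ N, 0 ≤ a N)
    (haA : ∀ᶠ N : ℕ in atTop, a N ≤ A * (N : ℝ) ^ β) :
    Tendsto (fun N => meanOffspring φ (a N) N) atTop (𝓝 0) := by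
  have hγ : β + (β - 1) / φ < 0 := by
    have := (lt_div_iff₀ (by linarith : 0 < 1 + φ)).1 hβ
    rw [show β + (β - 1) / φ = (β * (1 + φ) - 1) / φ by field_simp; ring]
    exact div_neg_of_neg_of_pos (by linarith) hφ
  have hpow : Tendsto (fun N : ℕ => (N : ℝ) ^ (β + (β - 1) / φ)) atTop (𝓝 0) := by
    simpa only [neg_neg, Function.comp_def] using
      (tendsto_rpow_neg_atTop (neg_pos.2 hγ)).comp tendsto_natCast_atTop_atTop
  refine squeeze_zero' (Eventually.of_forall fun N => meanOffspring_nonneg hφ.le (ha N) N) ?_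
    (by simpa only [mul_zero] using hpow.const_mul (A * ((1 + φ + A) / φ) ^ (1 / φ)))
  filter_upwards [haA, eventually_ge_atTop 1] with N haN hN
  exact meanOffspring_le_mul_rpow hφ hβ0 hN (ha N) haN

theorem tendsto_meanOffspring_atTop_zero {φ β : ℝ} (hφ : 0 ≤ φ) (hβ : β < 1 / (1 + φ))
    {a : ℕ → ℝ} (ha : ∀ N, 0 ≤ a N) (haβ : a =O[atTop] fun N : ℕ => (N : ℝ) ^ β) :
    Tendsto (fun N => meanOffspring φ (a N) N) atTop (𝓝 0) := by
  have hβ' : max β 0 < 1 / (1 + φ) := max_lt hβ (by positivity)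
  obtain ⟨ψ, hψβ, hφψ⟩ : ∃ ψ, max β 0 < 1 / (1 + ψ) ∧ φ < ψ := by
    have hcont : ContinuousAt (fun ψ : ℝ => 1 / (1 + ψ)) φ :=
      continuousAt_const.div (continuousAt_const.add continuousAt_id) (by positivity)
    exact ((eventually_nhdsWithin_of_eventually_nhds (hcont.eventually (lt_mem_nhds hβ'))).and
      (self_mem_nhdsWithin : Set.Ioi φ ∈ 𝓝[>] φ)).exists
  obtain ⟨A, hA0, hA⟩ := haβ.exists_pos
  have haA : ∀ᶠ N : ℕ in atTop, a N ≤ A * (N : ℝ) ^ max β 0 := by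
    filter_upwards [hA.bound, eventually_ge_atTop 1] with N hN hN1
    rw [norm_of_nonneg (ha N), norm_of_nonneg (by positivity)] at hN
    exact hN.trans (by gcongr; exacts [by exact_mod_cast hN1, le_max_left _ _])
  exact squeeze_zero (fun N => meanOffspring_nonneg hφ (ha N) N)
    (fun N => meanOffspring_mono_left hφ hφψ.le (ha N) N)
    (tendsto_meanOffspring_of_pos (hφ.trans_lt hφψ) (le_max_right _ _) hψβ ha haA)

theorem mean_offspring_polynomial_rate_general
    (d : ℕ) (phi : ℝ) (hphi : 0 ≤ phi)
    (c b : ℝ) (hc : 0 < c) (hb : b < 1 / (1 + phi))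
    (lam : ℕ → ℝ) (hlamdef : ∀ N : ℕ, lam N = c * (N : ℝ) ^ b) :
    Tendsto (fun N : ℕ =>
        2 * d * lam N * ∏ i ∈ Finset.Icc 1 (N - 1),
          (i * phi + 2 * d * lam N) / (1 + i * phi + 2 * d * lam N))
      atTop (nhds 0) ∧
    ∀ᶠ N : ℕ in atTop,
        2 * d * lam N * ∏ i ∈ Finset.Icc 1 (N - 1),
          (i * phi + 2 * d * lam N) / (1 + i * phi + 2 * d * lam N) < 1 := by
  have ha : ∀ N, 0 ≤ 2 * d * lam N := fun N => by rw [hlamdef]; positivity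
  have haO : (fun N => 2 * d * lam N) =O[atTop] fun N : ℕ => (N : ℝ) ^ b :=
    (isBigO_const_mul_self (2 * d * c) _ _).congr_left fun N => by rw [hlamdef]; ring
  have hm : Tendsto (fun N => meanOffspring phi (2 * d * lam N) N) atTop (𝓝 0) :=
    tendsto_meanOffspring_atTop_zero hphi hb ha haO
  exact ⟨hm, hm.eventually_lt_const one_pos⟩

/-- Concrete instance of Corollary 1: for a polynomial external birth rate
`λ(N) = c N^b` with `c > 0` and `b < 1/(1+φ)`, the mean offspring number
`m(N) = 2dλ(N) ∏_{i=1}^{N-1} (iφ+2dλ(N))/(1+iφ+2dλ(N))` tends to `0` as `N → ∞`;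
in particular it is eventually below `1`. -/
theorem mean_offspring_polynomial_rate
    (d : ℕ) (hd : 1 ≤ d) (phi : ℝ) (hphi : 0 ≤ phi)
    (c b : ℝ) (hc : 0 < c) (hb : b < 1 / (1 + phi))
    (lam : ℕ → ℝ) (hlamdef : ∀ N : ℕ, lam N = c * (N : ℝ) ^ b) :
    Tendsto (fun N : ℕ =>
        2 * d * lam N * ∏ i ∈ Finset.Icc 1 (N - 1),
          (i * phi + 2 * d * lam N) / (1 + i * phi + 2 * d * lam N))
      atTop (nhds 0) ∧
    ∀ᶠ N : ℕ in atTop,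
        2 * d * lam N * ∏ i ∈ Finset.Icc 1 (N - 1),
          (i * phi + 2 * d * lam N) / (1 + i * phi + 2 * d * lam N) < 1 :=
  mean_offspring_polynomial_rate_general d phi hphi c b hc hb lam hlamdef
end

section
/- For φ > 0, d ≥ 1, λ > 0, and N ≥ 2, the following lower bound on the log of the product holds: ln ∏_{i=1}^{N-1} (1 + iφ + 2dλ)/(iφ + 2dλ) = Σ_{i=1}^{N-1} ln(1 + 1/(iφ + 2dλ)) ≥ (1/(2φ)) · ln((1 + (N−1)φ/(1+2dλ))) − C for some constant C depending only on φ, d, λ; consequently ∏_{i=1}^{N-1} (iφ+2dλ)/(1+iφ+2dλ) ≤ C' · (1 + (N−1)φ)^{−1/(2φ)} for suitable C' > 0. -/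
/-!
Since `log (1 + 1/x) ≥ 1/(x + 1)` and `log (y + φ) - log y ≤ φ/y`, each term
`log (1 + 1/(iφ + a))` dominates `(log (y_i + φ) - log y_i)/φ` with `y_i = iφ + a + 1`.
Summing, the logarithms telescope, so the sum is at least `(1/φ) log (1 + (N-1)φ/(1+a))` up to
a constant; exponentiating gives the polynomial decay of the product of the reciprocal factors.
-/

open Real Finset

lemma one_div_add_one_le_log_one_add_one_div {x : ℝ} (hx : 0 < x) :
    1 / (x + 1) ≤ log (1 + 1 / x) := by
  have h := one_sub_inv_le_log_of_pos (show 0 < 1 + 1 / x by positivity)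
  have e : 1 - (1 + 1 / x)⁻¹ = 1 / (x + 1) := by field_simp; ring
  rwa [e] at h

lemma log_add_sub_log_le_div {y φ : ℝ} (hy : 0 < y) (hφ : 0 ≤ φ) :
    log (y + φ) - log y ≤ φ / y := by
  have h := log_le_sub_one_of_pos (show 0 < (y + φ) / y by positivity)
  rw [log_div (by positivity) hy.ne'] at h
  have e : (y + φ) / y - 1 = φ / y := by field_simp; ring
  linarith

lemma log_one_add_div_eq_log_sub_log {b x : ℝ} (hb : 0 < b) (hx : 0 ≤ x) :
    log (1 + x / b) = log (b + x) - log b := by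
  rw [← log_div (by positivity) hb.ne']
  congr 1
  field_simp

lemma log_add_one_add_sub_log_add_one_le {x φ : ℝ} (hx : 0 < x) (hφ : 0 ≤ φ) :
    log (x + 1 + φ) - log (x + 1) ≤ φ * log (1 + 1 / x) :=
  calc log (x + 1 + φ) - log (x + 1) ≤ φ / (x + 1) := log_add_sub_log_le_div (by positivity) hφ
    _ = φ * (1 / (x + 1)) := by ring
    _ ≤ φ * log (1 + 1 / x) := by gcongr; exact one_div_add_one_le_log_one_add_one_div hx

lemma le_exp_mul_rpow_neg_of_log_le {P K e t : ℝ} (hP : 0 < P) (ht : 0 < t)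
    (h : log P ≤ K - e * log t) : P ≤ exp K * t ^ (-e) := by
  rw [rpow_def_of_pos ht, ← exp_add, ← exp_log hP]
  gcongr
  linarith

section ShiftedSums

variable {φ a : ℝ}

lemma mul_add_pos_of_mem_Icc (hφ : 0 < φ) (ha : 0 ≤ a) {i n : ℕ} (hi : i ∈ Icc 1 n) :
    0 < (i : ℝ) * φ + a := by
  have : (1 : ℝ) ≤ i := by exact_mod_cast (mem_Icc.1 hi).1
  have : 0 < (i : ℝ) * φ := by positivity
  linarith

lemma log_sub_log_le_mul_sum_log (hφ : 0 < φ) (ha : 0 ≤ a) (n : ℕ) :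
    log (1 + a + (n + 1) * φ) - log (1 + a + φ)
      ≤ φ * ∑ i ∈ Icc 1 n, log (1 + 1 / (i * φ + a)) := by
  induction n with
  | zero => simp
  | succ n ih =>
    have hterm := log_add_one_add_sub_log_add_one_le
      (mul_add_pos_of_mem_Icc hφ ha (i := n + 1) (n := n + 1) (by simp)) hφ.le
    rw [sum_Icc_succ_top (by omega), mul_add]
    push_cast at hterm ⊢
    rw [show ((n : ℝ) + 1) * φ + a + 1 + φ = 1 + a + (n + 1 + 1) * φ by ring,
      show ((n : ℝ) + 1) * φ + a + 1 = 1 + a + (n + 1) * φ by ring] at hterm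
    linarith

lemma log_one_add_div_sub_le_sum_log (hφ : 0 < φ) (ha : 0 ≤ a) (n : ℕ) :
    1 / (2 * φ) * log (1 + n * φ / (1 + a)) - log (1 + φ / (1 + a)) / φ
      ≤ ∑ i ∈ Icc 1 n, log (1 + 1 / (i * φ + a)) := by
  have hL : 0 ≤ log (1 + n * φ / (1 + a)) := log_nonneg (by simp; positivity)
  have hmono : log (1 + a + n * φ) ≤ log (1 + a + (n + 1) * φ) :=
    log_le_log (by positivity) (by nlinarith)
  have key := log_sub_log_le_mul_sum_log hφ ha n
  rw [log_one_add_div_eq_log_sub_log (by positivity) (by positivity)] at hL ⊢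
  rw [log_one_add_div_eq_log_sub_log (by positivity) hφ.le]
  rw [show ∀ u v : ℝ, 1 / (2 * φ) * u - v / φ = (u / 2 - v) / φ by
    intro u v; field_simp, div_le_iff₀ hφ]
  linarith

end ShiftedSums

lemma log_prod_one_add_div_self {ι : Type*} (s : Finset ι) {x : ι → ℝ}
    (hx : ∀ i ∈ s, 0 < x i) :
    log (∏ i ∈ s, (1 + x i) / x i) = ∑ i ∈ s, log (1 + 1 / x i) := by
  have e : ∀ i ∈ s, (1 + x i) / x i = 1 + 1 / x i := fun i hi => by
    have := hx i hi
    field_simp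
    ring
  rw [prod_congr rfl e, log_prod]
  intro i hi
  have := hx i hi
  positivity

lemma log_prod_div_one_add_self {ι : Type*} (s : Finset ι) {x : ι → ℝ}
    (hx : ∀ i ∈ s, 0 < x i) :
    log (∏ i ∈ s, x i / (1 + x i)) = -∑ i ∈ s, log (1 + 1 / x i) := by
  rw [← log_prod_one_add_div_self s hx, ← log_inv, ← prod_inv_distrib]
  simp only [inv_div]

theorem survival_probability_polynomial_decay_general
    (d : ℕ) (phi lam : ℝ) (hphi : 0 < phi) (hlam : 0 < lam) :
    ∃ C C' : ℝ, 0 < C' ∧ ∀ N : ℕ, 2 ≤ N →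
      (Real.log (∏ i ∈ Finset.Icc 1 (N - 1),
          (1 + i * phi + 2 * d * lam) / (i * phi + 2 * d * lam))
        = ∑ i ∈ Finset.Icc 1 (N - 1), Real.log (1 + 1 / (i * phi + 2 * d * lam))) ∧
      ((1 / (2 * phi)) * Real.log (1 + (N - 1) * phi / (1 + 2 * d * lam)) - C
        ≤ ∑ i ∈ Finset.Icc 1 (N - 1), Real.log (1 + 1 / (i * phi + 2 * d * lam))) ∧
      (∏ i ∈ Finset.Icc 1 (N - 1),
          (i * phi + 2 * d * lam) / (1 + i * phi + 2 * d * lam)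
        ≤ C' * (1 + (N - 1) * phi) ^ (-(1 / (2 * phi)))) := by
  have ha : 0 ≤ 2 * (d : ℝ) * lam := by positivity
  refine ⟨log (1 + phi / (1 + 2 * d * lam)) / phi,
    exp (log (1 + phi / (1 + 2 * d * lam)) / phi + 1 / (2 * phi) * log (1 + 2 * d * lam)),
    exp_pos _, fun N hN => ?_⟩
  obtain ⟨n, rfl⟩ : ∃ n, N = n + 1 := ⟨N - 1, by omega⟩
  rw [Nat.add_sub_cancel, Nat.cast_add_one, add_sub_cancel_right]
  simp only [add_assoc (1 : ℝ)]
  have hx := fun i (hi : i ∈ Icc 1 n) => mul_add_pos_of_mem_Icc hphi ha hi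
  have hsum := log_one_add_div_sub_le_sum_log hphi ha n
  refine ⟨log_prod_one_add_div_self _ hx, hsum,
    le_exp_mul_rpow_neg_of_log_le (prod_pos fun i hi => ?_) (by positivity) ?_⟩
  · have := hx i hi
    positivity
  have hL : log (1 + n * phi) - log (1 + 2 * d * lam)
      ≤ log (1 + n * phi / (1 + 2 * d * lam)) := by
    rw [log_one_add_div_eq_log_sub_log (by positivity) (by positivity)]
    gcongr
    linarith
  have hL' := mul_le_mul_of_nonneg_left hL (show 0 ≤ 1 / (2 * phi) by positivity)
  rw [log_prod_div_one_add_self _ hx]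
  linarith

/-- Quantitative decay of the survival probability `P(A)`: for `φ > 0` there are
constants `C` (and `C' > 0`) depending only on `φ, d, λ` such that for all `N ≥ 2`,
`ln ∏_{i=1}^{N-1} (1+iφ+2dλ)/(iφ+2dλ) = Σ_{i=1}^{N-1} ln(1 + 1/(iφ+2dλ))
  ≥ (1/(2φ)) ln(1 + (N−1)φ/(1+2dλ)) − C`,
and consequently
`∏_{i=1}^{N-1} (iφ+2dλ)/(1+iφ+2dλ) ≤ C' (1+(N−1)φ)^{−1/(2φ)}`. -/
theorem survival_probability_polynomial_decay
    (d : ℕ) (hd : 1 ≤ d) (phi lam : ℝ) (hphi : 0 < phi) (hlam : 0 < lam) :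
    ∃ C C' : ℝ, 0 < C' ∧ ∀ N : ℕ, 2 ≤ N →
      (Real.log (∏ i ∈ Finset.Icc 1 (N - 1),
          (1 + i * phi + 2 * d * lam) / (i * phi + 2 * d * lam))
        = ∑ i ∈ Finset.Icc 1 (N - 1), Real.log (1 + 1 / (i * phi + 2 * d * lam))) ∧
      ((1 / (2 * phi)) * Real.log (1 + (N - 1) * phi / (1 + 2 * d * lam)) - C
        ≤ ∑ i ∈ Finset.Icc 1 (N - 1), Real.log (1 + 1 / (i * phi + 2 * d * lam))) ∧
      (∏ i ∈ Finset.Icc 1 (N - 1),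
          (i * phi + 2 * d * lam) / (1 + i * phi + 2 * d * lam)
        ≤ C' * (1 + (N - 1) * phi) ^ (-(1 / (2 * phi)))) :=
  survival_probability_polynomial_decay_general d phi lam hphi hlam
end
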